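/- Let T = k[x,y,z,w]/(xy+zw), let I = (x,w) and J = (x,z) be the ideals of T generated by the indicated classes. The T-linear map g : T² → T, g(a,b) = ax + bz, has image J, and its kernel is isomorphic to I as a T-module; hence there is a short exact sequence of T-modules 0 → I → T² → J → 0. -/

import Mathlib

/-! Since `x` is prime in `k[x,y,z,w]` and divides neither `z` nor `w`, it stays a non-zero-divisor
modulo `f = xy + zw`. Hence a syzygy `(a, b)` of `(x, z)` is determined by `b`, and the possible `b`
form the colon ideal `(x) : z`. This ideal is `(x, w)`: `wz = -yx` in `T`, and conversely, if
`f ∣ ax + bz`, say `ax + bz = qf`, then `x ∣ (b - qw) z`, so `x ∣ b - qw`. -/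

set_option synthInstance.maxHeartbeats 1000000
set_option maxHeartbeats 1000000

noncomputable section

/-- `T = k[x,y,z,w]/(xy+zw)`, with `x = X 0`, `y = X 1`, `z = X 2`, `w = X 3`. -/
abbrev T (k : Type*) [Field k] : Type _ :=
  MvPolynomial (Fin 4) k ⧸
    Ideal.span {(MvPolynomial.X 0 : MvPolynomial (Fin 4) k) * MvPolynomial.X 1 +
      MvPolynomial.X 2 * MvPolynomial.X 3}

/-- The class of `x` in `T`. -/
abbrev xT (k : Type*) [Field k] : T k := Ideal.Quotient.mk _ (MvPolynomial.X 0)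

/-- The class of `y` in `T`. -/
abbrev yT (k : Type*) [Field k] : T k := Ideal.Quotient.mk _ (MvPolynomial.X 1)

/-- The class of `z` in `T`. -/
abbrev zT (k : Type*) [Field k] : T k := Ideal.Quotient.mk _ (MvPolynomial.X 2)

/-- The class of `w` in `T`. -/
abbrev wT (k : Type*) [Field k] : T k := Ideal.Quotient.mk _ (MvPolynomial.X 3)

/-- The `T`-linear map `g : T² → T`, `g(a,b) = ax + bz`. -/
def gT (k : Type*) [Field k] : (T k × T k) →ₗ[T k] T k :=
  xT k • LinearMap.fst _ _ _ + zT k • LinearMap.snd _ _ _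

section Syzygy

variable {S : Type*} [CommRing S] (x z : S)

theorem range_smul_fst_add_smul_snd :
    LinearMap.range (x • LinearMap.fst S S S + z • LinearMap.snd S S S) = Ideal.span {x, z} := by
  ext t
  simp [Ideal.mem_span_pair, mul_comm]

def kerSmulFstAddSmulSndEquivColon (hx : x ∈ nonZeroDivisors S) :
    LinearMap.ker (x • LinearMap.fst S S S + z • LinearMap.snd S S S) ≃ₗ[S]
      (Ideal.span {x}).colon {z} :=
  let e := LinearMap.snd S S S ∘ₗ (LinearMap.ker (x • LinearMap.fst S S S +
    z • LinearMap.snd S S S)).subtype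
  have he : Function.Injective e := by
    rw [← LinearMap.ker_eq_bot, LinearMap.ker_eq_bot']
    rintro ⟨⟨a, b⟩, hab⟩ (rfl : b = 0)
    have hax : a * x = 0 := by simpa [mul_comm] using hab
    simp [(mem_nonZeroDivisors_iff_right.mp hx) a hax]
  have hrange : LinearMap.range e = (Ideal.span {x}).colon {z} := by
    ext b
    simp only [e, LinearMap.range_comp, Submodule.range_subtype, Submodule.mem_map,
      LinearMap.mem_ker, Submodule.mem_colon_singleton, Ideal.mem_span_singleton', smul_eq_mul]
    constructor
    · rintro ⟨⟨a, b⟩, hab, rfl⟩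
      have hab : x * a + z * b = 0 := hab
      exact ⟨-a, show -a * x = b * z by linear_combination -hab⟩
    · rintro ⟨a, hab⟩
      exact ⟨(-a, b), show x * -a + z * b = 0 by linear_combination -hab, rfl⟩
  (LinearEquiv.ofInjective e he).trans (LinearEquiv.ofEq _ _ hrange)

end Syzygy

section NodeQuotient

variable {R : Type*} [CommRing R] {x y z w : R}

theorem dvd_of_dvd_mul_right_of_prime [IsDomain R] (hx : Prime x) (hz : ¬x ∣ z) (hw : ¬x ∣ w)
    {a : R} (h : x * y + z * w ∣ a * x) : x * y + z * w ∣ a := by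
  obtain ⟨q, hq⟩ := h
  have hxqzw : x ∣ q * z * w := ⟨a - q * y, by linear_combination -hq⟩
  obtain ⟨c, rfl⟩ := (hx.dvd_or_dvd ((hx.dvd_or_dvd hxqzw).resolve_right hw)).resolve_right hz
  refine ⟨c, mul_left_cancel₀ hx.ne_zero ?_⟩
  linear_combination hq

theorem mem_span_pair_of_dvd_mul_add_mul (hx : Prime x) (hz : ¬x ∣ z) {a b : R}
    (h : x * y + z * w ∣ a * x + b * z) : b ∈ Ideal.span {x, w} := by
  obtain ⟨q, hq⟩ := h
  have hxz : x ∣ (b - q * w) * z := ⟨q * y - a, by linear_combination hq⟩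
  obtain ⟨c, hc⟩ := (hx.dvd_or_dvd hxz).resolve_right hz
  exact Ideal.mem_span_pair.mpr ⟨c, q, by linear_combination -hc⟩

theorem mk_mem_nonZeroDivisors_quotient_span [IsDomain R] (hx : Prime x) (hz : ¬x ∣ z)
    (hw : ¬x ∣ w) :
    Ideal.Quotient.mk (Ideal.span {x * y + z * w}) x ∈
      nonZeroDivisors (R ⧸ Ideal.span {x * y + z * w}) := by
  refine mem_nonZeroDivisors_iff_right.mpr fun a ha => ?_
  obtain ⟨a, rfl⟩ := Ideal.Quotient.mk_surjective a
  rw [← map_mul, Ideal.Quotient.eq_zero_iff_mem, Ideal.mem_span_singleton] at ha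
  rw [Ideal.Quotient.eq_zero_iff_mem, Ideal.mem_span_singleton]
  exact dvd_of_dvd_mul_right_of_prime hx hz hw ha

theorem colon_span_mk_eq_span_pair (hx : Prime x) (hz : ¬x ∣ z) :
    (Ideal.span {Ideal.Quotient.mk (Ideal.span {x * y + z * w}) x}).colon
        {Ideal.Quotient.mk (Ideal.span {x * y + z * w}) z} =
      Ideal.span {Ideal.Quotient.mk (Ideal.span {x * y + z * w}) x,
        Ideal.Quotient.mk (Ideal.span {x * y + z * w}) w} := by
  set π := Ideal.Quotient.mk (Ideal.span {x * y + z * w})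
  apply le_antisymm
  · intro b hb
    obtain ⟨a, hab⟩ := Ideal.mem_span_singleton'.mp (Submodule.mem_colon_singleton.mp hb)
    obtain ⟨a, rfl⟩ := Ideal.Quotient.mk_surjective a
    obtain ⟨b, rfl⟩ := Ideal.Quotient.mk_surjective b
    have hdvd : x * y + z * w ∣ -a * x + b * z := by
      rw [← Ideal.mem_span_singleton, ← Ideal.Quotient.eq_zero_iff_mem]
      simp only [map_add, map_mul, map_neg, smul_eq_mul] at hab ⊢
      linear_combination -hab
    have := Ideal.mem_map_of_mem π (mem_span_pair_of_dvd_mul_add_mul hx hz hdvd)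
    rwa [Ideal.map_span, Set.image_pair] at this
  · have hwz : π w * π z = -π y * π x := by
      rw [← map_mul, ← map_neg, ← map_mul, Ideal.Quotient.eq, Ideal.mem_span_singleton]
      exact ⟨1, by ring⟩
    rw [Ideal.span_le, Set.pair_subset_iff]
    simp only [SetLike.mem_coe, Submodule.mem_colon_singleton, smul_eq_mul, hwz]
    exact ⟨Ideal.mem_span_singleton'.mpr ⟨π z, mul_comm _ _⟩,
      Ideal.mem_span_singleton'.mpr ⟨-π y, rfl⟩⟩

end NodeQuotient

theorem stmt15_general (k : Type*) [Field k] :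
    (∀ a b : T k, gT k (a, b) = a * xT k + b * zT k) ∧
    LinearMap.range (gT k) = (Ideal.span {xT k, zT k} : Ideal (T k)) ∧
    Nonempty (LinearMap.ker (gT k) ≃ₗ[T k] ↥(Ideal.span {xT k, wT k})) := by
  have hx : Prime (MvPolynomial.X 0 : MvPolynomial (Fin 4) k) := MvPolynomial.X_prime
  have hndvd {i : Fin 4} (hi : i ≠ 0) : ¬(MvPolynomial.X 0 : MvPolynomial (Fin 4) k) ∣ .X i :=
    fun h => hi (MvPolynomial.X_dvd_X.mp h).symm
  refine ⟨fun a b => by simp [gT, mul_comm], range_smul_fst_add_smul_snd _ _, ⟨?_⟩⟩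
  exact (kerSmulFstAddSmulSndEquivColon _ _
      (mk_mem_nonZeroDivisors_quotient_span hx (hndvd (by decide)) (hndvd (by decide)))).trans
    (LinearEquiv.ofEq _ _ (colon_span_mk_eq_span_pair hx (hndvd (by decide))))

/-- The map `g : T² → T`, `g(a,b) = ax + bz`, has image the ideal `J = (x,z)`, and its
kernel is isomorphic to `I = (x,w)` as a `T`-module; hence there is a short exact sequence
`0 → I → T² → J → 0`. -/
theorem stmt15 (k : Type*) [Field k] [IsAlgClosed k] [CharZero k] :
    (∀ a b : T k, gT k (a, b) = a * xT k + b * zT k) ∧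
    LinearMap.range (gT k) = (Ideal.span {xT k, zT k} : Ideal (T k)) ∧
    Nonempty (LinearMap.ker (gT k) ≃ₗ[T k] ↥(Ideal.span {xT k, wT k})) :=
  stmt15_general k

end
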